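/- Let A be a trace-class operator with ‖A‖ < R on a separable Hilbert space, and P an orthogonal projection with Q = I − P. Let g(z) = Σ_{m=1}^∞ ω_m z^m be analytic in the disk of radius R, and define g⁽²⁾(t) = Σ_{m=2}^∞ m(m−1)|ω_m| t^{m−2}. Then ‖g(PAP) − P g(A) P‖_{S₁} ≤ (g⁽²⁾(‖A‖)/2) · ‖PAQ‖_{S₂} · ‖QAP‖_{S₂}. -/

import Mathlib

open scoped ENNReal

/-- The trace norm of a bounded operator on a Hilbert space, defined as the supremum
over pairs of finite orthonormal families of `∑ j |⟪T e_j, f_j⟫|`. -/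
noncomputable def traceNorm {H : Type*} [NormedAddCommGroup H] [InnerProductSpace ℂ H]
    (T : H →L[ℂ] H) : ℝ≥0∞ :=
  ⨆ (n : ℕ) (e : Fin n → H) (f : Fin n → H)
    (_ : Orthonormal ℂ e) (_ : Orthonormal ℂ f),
      ∑ j, (‖(inner ℂ (T (e j)) (f j) : ℂ)‖₊ : ℝ≥0∞)

/-- The square of the Hilbert–Schmidt norm: the supremum over finite orthonormal families
of `∑ j ‖T e_j‖²`. -/
noncomputable def hsNormSq {H : Type*} [NormedAddCommGroup H] [InnerProductSpace ℂ H]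
    (T : H →L[ℂ] H) : ℝ≥0∞ :=
  ⨆ (n : ℕ) (e : Fin n → H) (_ : Orthonormal ℂ e),
      ∑ j, (‖T (e j)‖₊ : ℝ≥0∞) ^ 2

/-!
Write `Q = 1 - P`. Telescoping `P A^m` against `(P A)^m P` and `A^j P` against `P (A P)^j`
gives, for every `m ≥ 2`,
`P A^m P - (P A P)^m = ∑ (P A)^i (P A Q) A^k (Q A P) (A P)^j` over the `m(m-1)/2` triples
with `i + k + j = m - 2`.
Each term is a product of two Hilbert–Schmidt operators, so by Cauchy–Schwarz its trace norm is
at most `‖A‖^(m-2) ‖P A Q‖₂ ‖Q A P‖₂`. Summing against the coefficients `ω m` gives the bound.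
-/

open Finset Finset.Nat ContinuousLinearMap

section CompressionIdentities

variable {R : Type*} [Ring R] (p x : R)

theorem mul_pow_succ_eq_add_sum (n : ℕ) :
    p * x ^ (n + 1) = (p * x) ^ (n + 1) * p +
      ∑ ij ∈ antidiagonal n, (p * x) ^ ij.1 * (p * x * (1 - p)) * x ^ ij.2 := by
  induction n with
  | zero =>
    simp only [zero_add, pow_one, HasAntidiagonal.antidiagonal_zero, sum_singleton, pow_zero,
      one_mul, mul_one]
    noncomm_ring
  | succ n ih =>
    have split :
        p * x ^ (n + 2) = p * x * (p * x ^ (n + 1)) + p * x * (1 - p) * x ^ (n + 1) := by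
      rw [pow_succ' x (n + 1)]; noncomm_ring
    rw [split, ih, sum_antidiagonal_succ, mul_add, mul_sum]
    simp only [pow_zero, one_mul, pow_succ' (p * x), mul_assoc]
    abel

theorem pow_succ_mul_eq_add_sum (n : ℕ) :
    x ^ (n + 1) * p = p * (x * p) ^ (n + 1) +
      ∑ ij ∈ antidiagonal n, x ^ ij.1 * ((1 - p) * x * p) * (x * p) ^ ij.2 := by
  induction n with
  | zero =>
    simp only [zero_add, pow_one, HasAntidiagonal.antidiagonal_zero, sum_singleton, pow_zero,
      one_mul, mul_one]
    noncomm_ring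
  | succ n ih =>
    have split :
        x ^ (n + 2) * p = x ^ (n + 1) * p * (x * p) + x ^ (n + 1) * ((1 - p) * x * p) := by
      rw [pow_succ x (n + 1)]; noncomm_ring
    rw [split, ih, sum_antidiagonal_succ', add_mul, sum_mul]
    simp only [pow_zero, mul_one, pow_succ (x * p), mul_assoc]
    abel

theorem IsIdempotentElem.compress_pow_succ {p : R} (hp : IsIdempotentElem p) (x : R) (n : ℕ) :
    (p * x * p) ^ (n + 1) = (p * x) ^ (n + 1) * p := by
  induction n with
  | zero => simp
  | succ n ih =>
    rw [pow_succ', ih, pow_succ' (p * x) n, pow_succ' (p * x) (n + 1), pow_succ' (p * x) n]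
    simp only [mul_assoc]
    rw [← mul_assoc p p, hp.eq]

theorem IsIdempotentElem.mul_pow_add_two_mul_eq {p : R} (hp : IsIdempotentElem p) (x : R) (n : ℕ) :
    p * x ^ (n + 2) * p = (p * x * p) ^ (n + 2) +
      ∑ ij ∈ antidiagonal n, ∑ kl ∈ antidiagonal ij.2,
        (p * x) ^ ij.1 * (p * x * (1 - p)) * x ^ kl.1 * ((1 - p) * x * p * (x * p) ^ kl.2) := by
  have hqp : (1 - p) * p = 0 := by rw [sub_mul, one_mul, hp.eq, sub_self]
  have hpxqp : p * x * (1 - p) * p = 0 := by rw [mul_assoc, hqp, mul_zero]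
  rw [mul_pow_succ_eq_add_sum, add_mul, sum_mul, sum_antidiagonal_succ', hp.compress_pow_succ]
  congr 1
  · rw [mul_assoc, hp.eq]
  rw [pow_zero, mul_one, mul_assoc _ (p * x * (1 - p)) p, hpxqp, mul_zero, zero_add]
  refine sum_congr rfl fun ij _ => ?_
  rw [mul_assoc _ (x ^ _), pow_succ_mul_eq_add_sum, mul_add, mul_sum]
  rw [← mul_assoc _ p, mul_assoc _ (p * x * (1 - p)) p, hpxqp, mul_zero, zero_mul, zero_add]
  simp only [mul_assoc]

end CompressionIdentities

section SchattenNorms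

variable {H : Type*} [NormedAddCommGroup H] [InnerProductSpace ℂ H]

local notation "⟪" x ", " y "⟫" => inner ℂ x y

theorem ofReal_sum_le_traceNorm (T : H →L[ℂ] H) {n : ℕ} {e f : Fin n → H}
    (he : Orthonormal ℂ e) (hf : Orthonormal ℂ f) :
    ENNReal.ofReal (∑ j, ‖⟪T (e j), f j⟫‖) ≤ traceNorm T := by
  rw [ENNReal.ofReal_sum_of_nonneg fun _ _ => norm_nonneg _]
  simp only [ofReal_norm]
  exact le_iSup_of_le n <| le_iSup_of_le e <| le_iSup_of_le f <| le_iSup_of_le he <|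
    le_iSup_of_le hf le_rfl

theorem traceNorm_le {T : H →L[ℂ] H} {C : ℝ≥0∞}
    (h : ∀ n (e f : Fin n → H), Orthonormal ℂ e → Orthonormal ℂ f →
      ENNReal.ofReal (∑ j, ‖⟪T (e j), f j⟫‖) ≤ C) :
    traceNorm T ≤ C := by
  refine iSup_le fun n => iSup_le fun e => iSup_le fun f => iSup_le fun he => iSup_le fun hf => ?_
  simpa [ENNReal.ofReal_sum_of_nonneg, ofReal_norm, enorm_eq_nnnorm] using h n e f he hf

theorem ofReal_sum_sq_le_hsNormSq (T : H →L[ℂ] H) {n : ℕ} {e : Fin n → H}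
    (he : Orthonormal ℂ e) :
    ENNReal.ofReal (∑ j, ‖T (e j)‖ ^ 2) ≤ hsNormSq T := by
  rw [ENNReal.ofReal_sum_of_nonneg fun _ _ => by positivity]
  simp only [ENNReal.ofReal_pow (norm_nonneg _), ofReal_norm]
  exact le_iSup_of_le n <| le_iSup_of_le e <| le_iSup_of_le he le_rfl

theorem hsNormSq_le {T : H →L[ℂ] H} {C : ℝ≥0∞}
    (h : ∀ n (e : Fin n → H), Orthonormal ℂ e → ENNReal.ofReal (∑ j, ‖T (e j)‖ ^ 2) ≤ C) :
    hsNormSq T ≤ C := by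
  refine iSup_le fun n => iSup_le fun e => iSup_le fun he => ?_
  simpa [ENNReal.ofReal_sum_of_nonneg, ENNReal.ofReal_pow, ofReal_norm, enorm_eq_nnnorm]
    using h n e he

theorem traceNorm_zero : traceNorm (0 : H →L[ℂ] H) = 0 :=
  nonpos_iff_eq_zero.mp <| traceNorm_le fun _ _ _ _ _ => by simp

theorem traceNorm_add_le (S T : H →L[ℂ] H) : traceNorm (S + T) ≤ traceNorm S + traceNorm T := by
  refine traceNorm_le fun n e f he hf => ?_
  calc ENNReal.ofReal (∑ j, ‖⟪(S + T) (e j), f j⟫‖)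
      ≤ ENNReal.ofReal (∑ j, ‖⟪S (e j), f j⟫‖ + ∑ j, ‖⟪T (e j), f j⟫‖) := by
        rw [← sum_add_distrib]
        gcongr with j
        simpa only [add_apply, inner_add_left] using norm_add_le _ _
    _ ≤ traceNorm S + traceNorm T := by
        rw [ENNReal.ofReal_add (by positivity) (by positivity)]
        exact add_le_add (ofReal_sum_le_traceNorm S he hf) (ofReal_sum_le_traceNorm T he hf)

theorem traceNorm_sum_le {ι : Type*} (s : Finset ι) (X : ι → H →L[ℂ] H) :
    traceNorm (∑ i ∈ s, X i) ≤ ∑ i ∈ s, traceNorm (X i) := by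
  classical
  induction s using Finset.induction_on with
  | empty => simp [traceNorm_zero]
  | insert i s hi ih =>
    rw [sum_insert hi, sum_insert hi]
    exact (traceNorm_add_le _ _).trans (by gcongr)

theorem traceNorm_smul_le (c : ℂ) (T : H →L[ℂ] H) : traceNorm (c • T) ≤ ‖c‖ₑ * traceNorm T := by
  refine traceNorm_le fun n e f he hf => ?_
  calc ENNReal.ofReal (∑ j, ‖⟪(c • T) (e j), f j⟫‖)
      = ENNReal.ofReal (‖c‖ * ∑ j, ‖⟪T (e j), f j⟫‖) := by
        simp only [smul_apply, inner_smul_left, norm_mul, RCLike.norm_conj, mul_sum]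
    _ ≤ ‖c‖ₑ * traceNorm T := by
        rw [ENNReal.ofReal_mul (norm_nonneg _), ofReal_norm]
        exact mul_le_mul_right (ofReal_sum_le_traceNorm T he hf) _

theorem traceNorm_neg (T : H →L[ℂ] H) : traceNorm (-T) = traceNorm T :=
  le_antisymm (by simpa using traceNorm_smul_le (-1) T) (by simpa using traceNorm_smul_le (-1) (-T))

theorem traceNorm_tsum_le (X : ℕ → H →L[ℂ] H) :
    traceNorm (∑' m, X m) ≤ ∑' m, traceNorm (X m) := by
  by_cases hX : Summable X
  swap
  · simp [tsum_eq_zero_of_not_summable hX, traceNorm_zero]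
  refine traceNorm_le fun n e f he hf => ?_
  have hcont : Continuous fun T : H →L[ℂ] H => ENNReal.ofReal (∑ j, ‖⟪T (e j), f j⟫‖) :=
    ENNReal.continuous_ofReal.comp (by fun_prop)
  refine le_of_tendsto' ((hcont.tendsto _).comp hX.hasSum.tendsto_sum_nat) fun N => ?_
  calc _ ≤ traceNorm (∑ m ∈ range N, X m) := ofReal_sum_le_traceNorm _ he hf
    _ ≤ ∑ m ∈ range N, traceNorm (X m) := traceNorm_sum_le _ _
    _ ≤ ∑' m, traceNorm (X m) := ENNReal.sum_le_tsum _

theorem hsNormSq_mul_le_left (B T : H →L[ℂ] H) : hsNormSq (B * T) ≤ ‖B‖ₑ ^ 2 * hsNormSq T := by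
  refine hsNormSq_le fun n e he => ?_
  calc ENNReal.ofReal (∑ j, ‖(B * T) (e j)‖ ^ 2)
      ≤ ENNReal.ofReal (‖B‖ ^ 2 * ∑ j, ‖T (e j)‖ ^ 2) := by
        rw [mul_sum]
        gcongr with j
        rw [← mul_pow]
        exact pow_le_pow_left₀ (norm_nonneg _) (B.le_opNorm _) 2
    _ ≤ ‖B‖ₑ ^ 2 * hsNormSq T := by
        rw [ENNReal.ofReal_mul (by positivity), ENNReal.ofReal_pow (norm_nonneg _), ofReal_norm]
        exact mul_le_mul_right (ofReal_sum_sq_le_hsNormSq T he) _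

noncomputable def hsNorm (T : H →L[ℂ] H) : ℝ≥0∞ :=
  hsNormSq T ^ ((1 : ℝ) / 2)

theorem ofReal_sqrt_sum_sq_le_hsNorm (T : H →L[ℂ] H) {n : ℕ} {e : Fin n → H}
    (he : Orthonormal ℂ e) : ENNReal.ofReal √(∑ j, ‖T (e j)‖ ^ 2) ≤ hsNorm T := by
  rw [Real.sqrt_eq_rpow, ← ENNReal.ofReal_rpow_of_nonneg (by positivity) (by norm_num)]
  exact ENNReal.rpow_le_rpow (ofReal_sum_sq_le_hsNormSq T he) (by norm_num)

theorem hsNorm_mul_le_left (B T : H →L[ℂ] H) : hsNorm (B * T) ≤ ‖B‖ₑ * hsNorm T := by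
  have hsq : (‖B‖ₑ ^ 2) ^ ((1 : ℝ) / 2) = ‖B‖ₑ := by
    simpa [one_div] using ENNReal.pow_rpow_inv_natCast two_ne_zero ‖B‖ₑ
  calc hsNorm (B * T) ≤ (‖B‖ₑ ^ 2 * hsNormSq T) ^ ((1 : ℝ) / 2) :=
        ENNReal.rpow_le_rpow (hsNormSq_mul_le_left B T) (by norm_num)
    _ = ‖B‖ₑ * hsNorm T := by rw [ENNReal.mul_rpow_of_nonneg _ _ (by norm_num), hsq, hsNorm]

variable [CompleteSpace H]

theorem hsNormSq_le_hsNormSq_adjoint (T : H →L[ℂ] H) : hsNormSq T ≤ hsNormSq (adjoint T) := by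
  refine hsNormSq_le fun n e he => ?_
  let F := Submodule.span ℂ (Set.range (T ∘ e))
  have : FiniteDimensional ℂ F := FiniteDimensional.span_of_finite ℂ (Set.finite_range _)
  let b := stdOrthonormalBasis ℂ F
  have hb : Orthonormal ℂ fun k => (b k : H) := b.orthonormal.comp_linearIsometry F.subtypeₗᵢ
  have parseval (j : Fin n) : ‖T (e j)‖ ^ 2 = ∑ k, ‖⟪e j, adjoint T (b k)⟫‖ ^ 2 := by
    refine (b.sum_sq_norm_inner_right ⟨T (e j), Submodule.subset_span ⟨j, rfl⟩⟩).symm.trans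
      (sum_congr rfl fun k _ => ?_)
    rw [adjoint_inner_right, norm_inner_symm (T (e j))]
    rfl
  calc ENNReal.ofReal (∑ j, ‖T (e j)‖ ^ 2)
      = ENNReal.ofReal (∑ k, ∑ j, ‖⟪e j, adjoint T (b k)⟫‖ ^ 2) := by
        simp only [parseval, sum_comm (s := univ (α := Fin n))]
    _ ≤ ENNReal.ofReal (∑ k, ‖adjoint T (b k)‖ ^ 2) := by
        gcongr with k
        exact he.sum_inner_products_le _
    _ ≤ hsNormSq (adjoint T) := ofReal_sum_sq_le_hsNormSq _ hb

theorem hsNormSq_adjoint (T : H →L[ℂ] H) : hsNormSq (adjoint T) = hsNormSq T :=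
  le_antisymm (by simpa using hsNormSq_le_hsNormSq_adjoint (adjoint T))
    (hsNormSq_le_hsNormSq_adjoint T)

theorem hsNorm_adjoint (T : H →L[ℂ] H) : hsNorm (adjoint T) = hsNorm T := by
  rw [hsNorm, hsNorm, hsNormSq_adjoint]

theorem hsNorm_mul_le_right (T B : H →L[ℂ] H) : hsNorm (T * B) ≤ hsNorm T * ‖B‖ₑ := by
  have hmul : adjoint (T * B) = adjoint B * adjoint T := adjoint_comp T B
  calc hsNorm (T * B) = hsNorm (adjoint B * adjoint T) := by rw [← hmul, hsNorm_adjoint]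
    _ ≤ ‖adjoint B‖ₑ * hsNorm (adjoint T) := hsNorm_mul_le_left _ _
    _ = hsNorm T * ‖B‖ₑ := by rw [hsNorm_adjoint, mul_comm, enorm_eq_nnnorm, enorm_eq_nnnorm,
          LinearIsometryEquiv.nnnorm_map]

theorem traceNorm_mul_le (X Y : H →L[ℂ] H) : traceNorm (X * Y) ≤ hsNorm X * hsNorm Y := by
  refine traceNorm_le fun n e f he hf => ?_
  calc ENNReal.ofReal (∑ j, ‖⟪(X * Y) (e j), f j⟫‖)
      ≤ ENNReal.ofReal (∑ j, ‖adjoint X (f j)‖ * ‖Y (e j)‖) := by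
        gcongr with j
        rw [ContinuousLinearMap.mul_def, comp_apply, ← adjoint_inner_right, mul_comm]
        exact norm_inner_le_norm _ _
    _ ≤ ENNReal.ofReal (√(∑ j, ‖adjoint X (f j)‖ ^ 2) * √(∑ j, ‖Y (e j)‖ ^ 2)) :=
        ENNReal.ofReal_le_ofReal (Real.sum_mul_le_sqrt_mul_sqrt _ _ _)
    _ ≤ hsNorm X * hsNorm Y := by
        rw [ENNReal.ofReal_mul (Real.sqrt_nonneg _), ← hsNorm_adjoint X]
        exact mul_le_mul' (ofReal_sqrt_sum_sq_le_hsNorm _ hf) (ofReal_sqrt_sum_sq_le_hsNorm _ he)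

end SchattenNorms

theorem ContinuousLinearMap.norm_pow_le {𝕜 E : Type*} [NontriviallyNormedField 𝕜]
    [SeminormedAddCommGroup E] [NormedSpace 𝕜 E] (T : E →L[𝕜] E) (n : ℕ) :
    ‖T ^ n‖ ≤ ‖T‖ ^ n := by
  induction n with
  | zero => exact norm_id_le
  | succ n ih =>
    rw [pow_succ, pow_succ]
    exact (norm_mul_le _ _).trans (by gcongr)

theorem Finset.Nat.sum_antidiagonal_card_antidiagonal_snd (n : ℕ) :
    ∑ ij ∈ antidiagonal n, #(antidiagonal ij.2) = (n + 2).choose 2 := by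
  induction n with
  | zero => rfl
  | succ n ih =>
    rw [sum_antidiagonal_succ, ih, card_antidiagonal, Nat.choose_succ_succ' (n + 2) 1,
      Nat.choose_one_right]

theorem IsStarProjection.norm_mul_left_le {E : Type*} [NonUnitalNormedRing E] [StarRing E]
    [CStarRing E] {p : E} (hp : IsStarProjection p) (a : E) : ‖p * a‖ ≤ ‖a‖ :=
  (norm_mul_le _ _).trans (mul_le_of_le_one_left (norm_nonneg _) (hp.norm_le p))

theorem IsStarProjection.norm_mul_right_le {E : Type*} [NonUnitalNormedRing E] [StarRing E]
    [CStarRing E] {p : E} (hp : IsStarProjection p) (a : E) : ‖a * p‖ ≤ ‖a‖ :=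
  (norm_mul_le _ _).trans (mul_le_of_le_one_right (norm_nonneg _) (hp.norm_le p))

section Compression

variable {H : Type*} [NormedAddCommGroup H] [InnerProductSpace ℂ H] [CompleteSpace H]

theorem traceNorm_mul_mul_le (B₁ X B₂ Y B₃ : H →L[ℂ] H) :
    traceNorm (B₁ * X * B₂ * (Y * B₃)) ≤ ‖B₁‖ₑ * ‖B₂‖ₑ * ‖B₃‖ₑ * (hsNorm X * hsNorm Y) :=
  calc _ ≤ hsNorm (B₁ * X * B₂) * hsNorm (Y * B₃) := traceNorm_mul_le _ _
    _ ≤ ‖B₁‖ₑ * hsNorm X * ‖B₂‖ₑ * (hsNorm Y * ‖B₃‖ₑ) := by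
        gcongr
        · exact (hsNorm_mul_le_right _ _).trans (by gcongr; exact hsNorm_mul_le_left _ _)
        · exact hsNorm_mul_le_right _ _
    _ = _ := by ring

theorem IsStarProjection.traceNorm_compress_pow_sub_le {P : H →L[ℂ] H}
    (hP : IsStarProjection P) (A : H →L[ℂ] H) (n : ℕ) :
    traceNorm ((P * A * P) ^ (n + 2) - P * A ^ (n + 2) * P) ≤
      ENNReal.ofReal ((n + 2).choose 2 * ‖A‖ ^ n) *
        (hsNorm (P * A * (1 - P)) * hsNorm ((1 - P) * A * P)) := by
  set K := hsNorm (P * A * (1 - P)) * hsNorm ((1 - P) * A * P)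
  have hterm (i k j : ℕ) (h : i + (k + j) = n) :
      traceNorm ((P * A) ^ i * (P * A * (1 - P)) * A ^ k * ((1 - P) * A * P * (A * P) ^ j))
        ≤ ENNReal.ofReal (‖A‖ ^ n) * K := by
    refine (traceNorm_mul_mul_le _ _ _ _ _).trans ?_
    gcongr ?_ * _
    rw [← ofReal_norm, ← ofReal_norm, ← ofReal_norm, ← ENNReal.ofReal_mul (by positivity),
      ← ENNReal.ofReal_mul (by positivity), ← h, pow_add, pow_add, ← mul_assoc]
    gcongr
    · exact ((P * A).norm_pow_le i).trans (by gcongr; exact hP.norm_mul_left_le A)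
    · exact A.norm_pow_le k
    · exact ((A * P).norm_pow_le j).trans (by gcongr; exact hP.norm_mul_right_le A)
  rw [hP.isIdempotentElem.mul_pow_add_two_mul_eq, sub_add_cancel_left, traceNorm_neg]
  calc _ ≤ ∑ ij ∈ antidiagonal n, ∑ kl ∈ antidiagonal ij.2, traceNorm
        ((P * A) ^ ij.1 * (P * A * (1 - P)) * A ^ kl.1 * ((1 - P) * A * P * (A * P) ^ kl.2)) :=
        (traceNorm_sum_le _ _).trans (sum_le_sum fun _ _ => traceNorm_sum_le _ _)
    _ ≤ ∑ ij ∈ antidiagonal n, ∑ kl ∈ antidiagonal ij.2, ENNReal.ofReal (‖A‖ ^ n) * K := by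
        gcongr with ij hij kl hkl
        rw [HasAntidiagonal.mem_antidiagonal] at hij hkl
        exact hterm _ _ _ (by rw [hkl, hij])
    _ = _ := by
        simp only [sum_const, nsmul_eq_mul, ← sum_mul]
        rw [← Nat.cast_sum, sum_antidiagonal_card_antidiagonal_snd, ← mul_assoc,
          ENNReal.ofReal_mul (by positivity), ENNReal.ofReal_natCast]

end Compression

theorem summable_smul_pow_of_norm_le {𝕜 E : Type*} [NontriviallyNormedField 𝕜]
    [NormedAddCommGroup E] [NormedSpace 𝕜 E] [CompleteSpace E] {ω : ℕ → 𝕜} {r : ℝ}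
    (hω : Summable fun m => ‖ω m‖ * r ^ m) {T : E →L[𝕜] E} (hT : ‖T‖ ≤ r) :
    Summable fun m => ω m • T ^ m :=
  hω.of_norm_bounded fun m => by
    rw [norm_smul]
    gcongr
    exact (T.norm_pow_le m).trans (pow_le_pow_left₀ (norm_nonneg T) hT m)

theorem tsum_smul_compress_pow_sub {𝕜 A : Type*} [NormedField 𝕜] [NormedRing A]
    [NormedAlgebra 𝕜 A] (p x : A) {ω : ℕ → 𝕜} (hω0 : ω 0 = 0)
    (hx : Summable fun m => ω m • x ^ m) (hpxp : Summable fun m => ω m • (p * x * p) ^ m) :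
    (∑' m, ω m • (p * x * p) ^ m) - p * (∑' m, ω m • x ^ m) * p =
      ∑' m, ω (m + 2) • ((p * x * p) ^ (m + 2) - p * x ^ (m + 2) * p) := by
  have hcompress := (hx.mul_left p).mul_right p
  rw [← hx.tsum_mul_left, ← (hx.mul_left p).tsum_mul_right, ← hpxp.tsum_sub hcompress,
    ← (hpxp.sub hcompress).sum_add_tsum_nat_add 2]
  simp [sum_range_succ, hω0, smul_sub]

theorem summable_choose_two_mul_mul_pow {a : ℕ → ℝ} {r ρ : ℝ} (ha0 : ∀ m, 0 ≤ a m)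
    (ha : Summable fun m => a m * ρ ^ m) (hr : 0 ≤ r) (hrρ : r < ρ) :
    Summable fun m => ((m + 2).choose 2 : ℝ) * a (m + 2) * r ^ m := by
  have hρ : 0 < ρ := hr.trans_lt hrρ
  have ht : ‖r / ρ‖ < 1 := by
    rw [Real.norm_of_nonneg (by positivity)]
    exact (div_lt_one hρ).2 hrρ
  set C := ∑' m, a m * ρ ^ m
  refine Summable.of_nonneg_of_le (fun m => mul_nonneg (mul_nonneg (by positivity) (ha0 _))
    (pow_nonneg hr m)) (fun m => ?_)
    ((summable_choose_mul_geometric_of_norm_lt_one 2 ht).mul_right (C / ρ ^ 2))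
  have hle : a (m + 2) * ρ ^ (m + 2) ≤ C :=
    ha.le_tsum (m + 2) fun k _ => mul_nonneg (ha0 k) (pow_nonneg hρ.le k)
  calc ((m + 2).choose 2 : ℝ) * a (m + 2) * r ^ m
      = (m + 2).choose 2 * (r / ρ) ^ m * (a (m + 2) * ρ ^ (m + 2)) / ρ ^ 2 := by
        rw [div_pow, pow_add]
        field_simp
    _ ≤ (m + 2).choose 2 * (r / ρ) ^ m * C / ρ ^ 2 := by gcongr
    _ = _ := by ring

theorem stmt_7_general {H : Type*} [NormedAddCommGroup H] [InnerProductSpace ℂ H]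
    [CompleteSpace H]
    (A P : H →L[ℂ] H)
    (hPidem : IsIdempotentElem P) (hPsa : IsSelfAdjoint P)
    (ω : ℕ → ℂ) (hω0 : ω 0 = 0) (R : ℝ) (hR : ‖A‖ < R)
    (hconv : ∀ r : ℝ, 0 ≤ r → r < R → Summable (fun m => ‖ω m‖ * r ^ m)) :
    traceNorm ((∑' m : ℕ, ω m • (P * A * P) ^ m) - P * (∑' m : ℕ, ω m • A ^ m) * P)
      ≤ ENNReal.ofReal ((∑' m : ℕ, ((m:ℝ)+2) * ((m:ℝ)+1) * ‖ω (m+2)‖ * ‖A‖ ^ m) / 2) *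
          (hsNormSq (P * A * (1 - P))) ^ ((1:ℝ)/2) *
          (hsNormSq ((1 - P) * A * P)) ^ ((1:ℝ)/2) := by
  have hP : IsStarProjection P := ⟨hPidem, hPsa⟩
  have hω := hconv ‖A‖ (norm_nonneg A) hR
  have hPAP : ‖P * A * P‖ ≤ ‖A‖ := (hP.norm_mul_right_le _).trans (hP.norm_mul_left_le A)
  have hcoef : Summable fun m => ‖ω (m + 2)‖ * ((m + 2).choose 2 * ‖A‖ ^ m) := by
    obtain ⟨ρ, hAρ, hρR⟩ := exists_between hR
    refine (summable_choose_two_mul_mul_pow (fun m => norm_nonneg (ω m))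
      (hconv ρ ((norm_nonneg A).trans hAρ.le) hρR) (norm_nonneg A) hAρ).congr fun m => ?_
    ring
  set K := hsNorm (P * A * (1 - P)) * hsNorm ((1 - P) * A * P)
  rw [tsum_smul_compress_pow_sub P A hω0 (summable_smul_pow_of_norm_le hω le_rfl)
    (summable_smul_pow_of_norm_le hω hPAP)]
  calc _ ≤ ∑' m, traceNorm (ω (m + 2) • ((P * A * P) ^ (m + 2) - P * A ^ (m + 2) * P)) :=
        traceNorm_tsum_le _
    _ ≤ ∑' m, ENNReal.ofReal (‖ω (m + 2)‖ * ((m + 2).choose 2 * ‖A‖ ^ m)) * K := by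
        refine ENNReal.tsum_le_tsum fun m => (traceNorm_smul_le _ _).trans ?_
        rw [ENNReal.ofReal_mul (norm_nonneg _), ofReal_norm, mul_assoc ‖ω (m + 2)‖ₑ]
        exact mul_le_mul_right (hP.traceNorm_compress_pow_sub_le A m) _
    _ = ENNReal.ofReal (∑' m, ‖ω (m + 2)‖ * ((m + 2).choose 2 * ‖A‖ ^ m)) * K := by
        rw [ENNReal.tsum_mul_right, ENNReal.ofReal_tsum_of_nonneg (fun m => by positivity) hcoef]
    _ = _ := by
        rw [← mul_assoc, ← tsum_div_const]
        congr 3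
        refine tsum_congr fun m => ?_
        rw [Nat.cast_choose_two]
        push_cast
        ring

/-- `‖g(PAP) − P g(A) P‖₁ ≤ (g⁽²⁾(‖A‖)/2)‖PAQ‖₂‖QAP‖₂`. -/
theorem stmt_7 {H : Type*} [NormedAddCommGroup H] [InnerProductSpace ℂ H]
    [CompleteSpace H] [TopologicalSpace.SeparableSpace H]
    (A P : H →L[ℂ] H) (hAtr : traceNorm A ≠ ⊤)
    (hPidem : IsIdempotentElem P) (hPsa : IsSelfAdjoint P)
    (ω : ℕ → ℂ) (hω0 : ω 0 = 0) (R : ℝ) (hR : ‖A‖ < R)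
    (hconv : ∀ r : ℝ, 0 ≤ r → r < R → Summable (fun m => ‖ω m‖ * r ^ m)) :
    traceNorm ((∑' m : ℕ, ω m • (P * A * P) ^ m) - P * (∑' m : ℕ, ω m • A ^ m) * P)
      ≤ ENNReal.ofReal ((∑' m : ℕ, ((m:ℝ)+2) * ((m:ℝ)+1) * ‖ω (m+2)‖ * ‖A‖ ^ m) / 2) *
          (hsNormSq (P * A * (1 - P))) ^ ((1:ℝ)/2) *
          (hsNormSq ((1 - P) * A * P)) ^ ((1:ℝ)/2) :=
  stmt_7_general A P hPidem hPsa ω hω0 R hR hconv
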